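/- Let P be a finite partial interleaving between subsets of T₁ and T₂ with d_P(T₁, T₂) > 0, and let Q be a finite minimal P-augmentation. If P is dominant and locally correct, then Q is dominant and locally correct. -/

import Mathlib

open Set

/-- An abstract merge tree: the topological realization of a finite rooted tree with a
height function that is strictly increasing towards the root (the root sits at height ∞,
so above every point there is a unique ancestor at every height). The ancestor
relation `le` (`x ⪯ y` = `y` is an ancestor of `x`) abstracts the `f`-monotone paths. -/
structure MergeTree where
  X : Type
  le : X → X → Prop
  f : X → ℝ
  top : TopologicalSpace X
  nonempty : Nonempty X
  le_refl : ∀ x, le x x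
  le_trans : ∀ x y z, le x y → le y z → le x z
  le_antisymm : ∀ x y, le x y → le y x → x = y
  f_mono : ∀ x y, le x y → f x ≤ f y
  f_strictMono : ∀ x y, le x y → f x = f y → x = y
  f_cont : @Continuous X ℝ top inferInstance f
  /-- the unique ancestor of `x` at height `h` (junk for `h < f x`). -/
  anc : X → ℝ → X
  le_anc : ∀ x h, f x ≤ h → le x (anc x h)
  f_anc : ∀ x h, f x ≤ h → f (anc x h) = h
  anc_unique : ∀ x y, le x y → y = anc x (f y)
  /-- rootedness: any two points have a common ancestor. -/
  directed : ∀ x y, ∃ z, le x z ∧ le y z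
  /-- tree-ness: the ancestors of a point are totally ordered. -/
  anc_total : ∀ x y z, le x y → le x z → le y z ∨ le z y
  /-- the (finitely many) vertices of the underlying combinatorial tree. -/
  V : Set X
  V_finite : V.Finite

/-- `(S, φ)` is a partial up-map from `S ⊆ T₁` to `T₂`. -/
def IsUpMap (T1 T2 : MergeTree) (S : Set T1.X) (φ : T1.X → T2.X) : Prop :=
  (∀ x ∈ S, T1.f x ≤ T2.f (φ x)) ∧
  ∀ x1 ∈ S, ∀ x2 ∈ S, T1.le x1 x2 → T2.le (φ x1) (φ x2)

/-- The partial up-map `(S, φ)` extends the partial up-map `(S', φ')`. -/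
def UpMapExtends (T1 T2 : MergeTree) (S : Set T1.X) (φ : T1.X → T2.X)
    (S' : Set T1.X) (φ' : T1.X → T2.X) : Prop :=
  S' ⊆ S ∧ ∀ x ∈ S', T2.le (φ' x) (φ x)

/-- The partial up-map `(S, φ)` uses the partial up-map `(S', φ')`. -/
def UpMapUses (T1 T2 : MergeTree) (S : Set T1.X) (φ : T1.X → T2.X)
    (S' : Set T1.X) (φ' : T1.X → T2.X) : Prop :=
  S' ⊆ S ∧ ∀ x ∈ S', φ x = φ' x

/-- The map `φ↑[δ]`, sending `x` to the ancestor of `φ x` at height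
`max (f₁ x + δ) (f₂ (φ x))`. -/
noncomputable def liftMap (T1 T2 : MergeTree) (φ : T1.X → T2.X) (δ : ℝ) : T1.X → T2.X :=
  fun x => T2.anc (φ x) (max (T1.f x + δ) (T2.f (φ x)))

/-- `(S₁, φ, S₂, ψ)` is a partial interleaving between `S₁ ⊆ T₁` and `S₂ ⊆ T₂`. -/
def IsPartialInterleaving (T1 T2 : MergeTree) (S1 : Set T1.X) (φ : T1.X → T2.X)
    (S2 : Set T2.X) (ψ : T2.X → T1.X) : Prop :=
  IsUpMap T1 T2 S1 φ ∧ IsUpMap T2 T1 S2 ψ ∧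
  (∀ x ∈ S1, ∀ y ∈ S2, T2.le (φ x) y → T1.le x (ψ y)) ∧
  (∀ x ∈ S1, ∀ y ∈ S2, T1.le (ψ y) x → T2.le y (φ x))

/-- The partial interleaving `(S1, φ, S2, ψ)` extends `(S1', φ', S2', ψ')`. -/
def InterExtends (T1 T2 : MergeTree) (S1 : Set T1.X) (φ : T1.X → T2.X)
    (S2 : Set T2.X) (ψ : T2.X → T1.X)
    (S1' : Set T1.X) (φ' : T1.X → T2.X) (S2' : Set T2.X) (ψ' : T2.X → T1.X) : Prop :=
  UpMapExtends T1 T2 S1 φ S1' φ' ∧ UpMapExtends T2 T1 S2 ψ S2' ψ'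

/-- The partial interleaving `(S1, φ, S2, ψ)` uses `(S1', φ', S2', ψ')`:
its component maps agree with those of the latter on its domains. -/
def InterUses (T1 T2 : MergeTree) (S1 : Set T1.X) (φ : T1.X → T2.X)
    (S2 : Set T2.X) (ψ : T2.X → T1.X)
    (S1' : Set T1.X) (φ' : T1.X → T2.X) (S2' : Set T2.X) (ψ' : T2.X → T1.X) : Prop :=
  UpMapUses T1 T2 S1 φ S1' φ' ∧ UpMapUses T2 T1 S2 ψ S2' ψ'

/-- A complete interleaving between `T₁` and `T₂`. -/
def IsInterleaving (T1 T2 : MergeTree) (α : T1.X → T2.X) (β : T2.X → T1.X) : Prop :=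
  IsPartialInterleaving T1 T2 univ α univ β

/-- The shift `sup {f₂(φ x) − f₁ x | x ∈ S}` of a partial up-map (valued in `EReal`). -/
noncomputable def mapShift (T1 T2 : MergeTree) (S : Set T1.X) (φ : T1.X → T2.X) : EReal :=
  sSup ((fun x => ((T2.f (φ x) - T1.f x : ℝ) : EReal)) '' S)

/-- The shift of a partial interleaving. -/
noncomputable def interShift (T1 T2 : MergeTree) (S1 : Set T1.X) (φ : T1.X → T2.X)
    (S2 : Set T2.X) (ψ : T2.X → T1.X) : EReal :=
  max (mapShift T1 T2 S1 φ) (mapShift T2 T1 S2 ψ)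

/-- `α` and `β` are δ-compatible maps between `T₁` and `T₂` (Morozov et al.). -/
def Compatible (T1 T2 : MergeTree) (δ : ℝ) (α : T1.X → T2.X) (β : T2.X → T1.X) : Prop :=
  @Continuous T1.X T2.X T1.top T2.top α ∧ @Continuous T2.X T1.X T2.top T1.top β ∧
  (∀ x, T2.f (α x) = T1.f x + δ) ∧
  (∀ y, T1.f (β y) = T2.f y + δ) ∧
  (∀ x, β (α x) = T1.anc x (T1.f x + 2 * δ)) ∧
  (∀ y, α (β y) = T2.anc y (T2.f y + 2 * δ))

/-- The interleaving distance: the infimum δ for which δ-compatible maps exist. -/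
noncomputable def intDist (T1 T2 : MergeTree) : EReal :=
  sInf {d : EReal | ∃ δ : ℝ, 0 ≤ δ ∧ d = (δ : EReal) ∧ ∃ α β, Compatible T1 T2 δ α β}

/-- The set of critical values Δ(T₁, T₂). -/
def DeltaSet (T1 T2 : MergeTree) : Set ℝ :=
  {d | ∃ v ∈ T1.V, ∃ w ∈ T2.V, d = |T1.f v - T2.f w|} ∪
  {d | ∃ v1 ∈ T1.V, ∃ v2 ∈ T1.V, d = |T1.f v1 - T1.f v2| / 2} ∪
  {d | ∃ w1 ∈ T2.V, ∃ w2 ∈ T2.V, d = |T2.f w1 - T2.f w2| / 2}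

/-- The arrow `(x, y)` lies in the fan `F[A_φ]` of the partial up-map `(S, φ)`. -/
def InFan (T1 T2 : MergeTree) (S : Set T1.X) (φ : T1.X → T2.X) (x : T1.X) (y : T2.X) : Prop :=
  T1.f x ≤ T2.f y ∧ ∃ x0 ∈ S, φ x0 = y ∧ T1.le x0 x

open Classical in
/-- The `(S, φ)`-residual shift of an arrow `(x, y)`. -/
noncomputable def resArrowShift (T1 T2 : MergeTree) (S : Set T1.X) (φ : T1.X → T2.X)
    (x : T1.X) (y : T2.X) : ℝ :=
  if InFan T1 T2 S φ x y then 0 else T2.f y - T1.f x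

/-- The `(S, φ)`-residual shift of a partial up-map `(S', φ')`. -/
noncomputable def resMapShift (T1 T2 : MergeTree) (S : Set T1.X) (φ : T1.X → T2.X)
    (S' : Set T1.X) (φ' : T1.X → T2.X) : EReal :=
  sSup ((fun x => ((resArrowShift T1 T2 S φ x (φ' x) : ℝ) : EReal)) '' S')

/-- The `P`-residual shift of a partial interleaving `P' = (S1', φ', S2', ψ')`,
where `P = (S1, φ, S2, ψ)`. -/
noncomputable def resInterShift (T1 T2 : MergeTree)
    (S1 : Set T1.X) (φ : T1.X → T2.X) (S2 : Set T2.X) (ψ : T2.X → T1.X)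
    (S1' : Set T1.X) (φ' : T1.X → T2.X) (S2' : Set T2.X) (ψ' : T2.X → T1.X) : EReal :=
  max (resMapShift T1 T2 S1 φ S1' φ') (resMapShift T2 T1 S2 ψ S2' ψ')

/-- `(α, β)` is a complete interleaving extending the partial interleaving `(S1, φ, S2, ψ)`. -/
def IsCompleteExtension (T1 T2 : MergeTree)
    (S1 : Set T1.X) (φ : T1.X → T2.X) (S2 : Set T2.X) (ψ : T2.X → T1.X)
    (α : T1.X → T2.X) (β : T2.X → T1.X) : Prop :=
  IsInterleaving T1 T2 α β ∧ InterExtends T1 T2 univ α univ β S1 φ S2 ψ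

/-- The `P`-residual interleaving distance `d_P(T₁, T₂)`. -/
noncomputable def resDist (T1 T2 : MergeTree)
    (S1 : Set T1.X) (φ : T1.X → T2.X) (S2 : Set T2.X) (ψ : T2.X → T1.X) : EReal :=
  sInf {d : EReal | ∃ α β, IsCompleteExtension T1 T2 S1 φ S2 ψ α β ∧
    d = resInterShift T1 T2 S1 φ S2 ψ univ α univ β}

/-- The `P`-critical points of `T₁`. -/
def critPts1 (T1 T2 : MergeTree) (S1 : Set T1.X) (S2 : Set T2.X) (ψ : T2.X → T1.X) :
    Set T1.X :=
  T1.V ∪ S1 ∪ ψ '' S2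

/-- The `P`-critical points of `T₂`. -/
def critPts2 (T1 T2 : MergeTree) (S1 : Set T1.X) (φ : T1.X → T2.X) (S2 : Set T2.X) :
    Set T2.X :=
  T2.V ∪ S2 ∪ φ '' S1

/-- The set of `P`-critical values `Δ[P](T₁, T₂)`. -/
def DeltaPSet (T1 T2 : MergeTree)
    (S1 : Set T1.X) (φ : T1.X → T2.X) (S2 : Set T2.X) (ψ : T2.X → T1.X) : Set ℝ :=
  {d | ∃ v ∈ critPts1 T1 T2 S1 S2 ψ, ∃ w ∈ critPts2 T1 T2 S1 φ S2, d = |T1.f v - T2.f w|} ∪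
  {d | ∃ v1 ∈ T1.V, ∃ v2 ∈ T1.V, d = |T1.f v1 - T1.f v2| / 2} ∪
  {d | ∃ w1 ∈ T2.V, ∃ w2 ∈ T2.V, d = |T2.f w1 - T2.f w2| / 2}

/-- The partial interleaving `(S1', φ', S2', ψ')` uses a `P`-critical pair whose
corresponding critical value is `d`, where `P = (S1, φ, S2, ψ)` supplies the critical
points. The four disjuncts are: arrow critical pairs in either direction, and zigzag
critical pairs on either tree. -/
def UsesCritPair (T1 T2 : MergeTree)
    (S1 : Set T1.X) (φ : T1.X → T2.X) (S2 : Set T2.X) (ψ : T2.X → T1.X)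
    (S1' : Set T1.X) (φ' : T1.X → T2.X) (S2' : Set T2.X) (ψ' : T2.X → T1.X) (d : ℝ) : Prop :=
  (∃ v ∈ critPts1 T1 T2 S1 S2 ψ, ∃ w ∈ critPts2 T1 T2 S1 φ S2,
      T1.f v ≤ T2.f w ∧ d = T2.f w - T1.f v ∧ v ∈ S1' ∧ φ' v = w) ∨
  (∃ w ∈ critPts2 T1 T2 S1 φ S2, ∃ v ∈ critPts1 T1 T2 S1 S2 ψ,
      T2.f w ≤ T1.f v ∧ d = T1.f v - T2.f w ∧ w ∈ S2' ∧ ψ' w = v) ∨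
  (∃ v1 ∈ T1.V, ∃ v2 ∈ T1.V, d = (T1.f v2 - T1.f v1) / 2 ∧
      ∃ y, T2.f y = T1.f v1 + d ∧ v1 ∈ S1' ∧ φ' v1 = y ∧ y ∈ S2' ∧ ψ' y = v2) ∨
  (∃ w1 ∈ T2.V, ∃ w2 ∈ T2.V, d = (T2.f w2 - T2.f w1) / 2 ∧
      ∃ x, T1.f x = T2.f w1 + d ∧ w1 ∈ S2' ∧ ψ' w1 = x ∧ x ∈ S1' ∧ φ' x = w2)

/-- `Q = (SQ1, φQ, SQ2, ψQ)` is a `P`-augmentation, `P = (S1, φ, S2, ψ)`. -/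
def IsAugmentation (T1 T2 : MergeTree)
    (S1 : Set T1.X) (φ : T1.X → T2.X) (S2 : Set T2.X) (ψ : T2.X → T1.X)
    (SQ1 : Set T1.X) (φQ : T1.X → T2.X) (SQ2 : Set T2.X) (ψQ : T2.X → T1.X) : Prop :=
  IsPartialInterleaving T1 T2 SQ1 φQ SQ2 ψQ ∧
  InterExtends T1 T2 SQ1 φQ SQ2 ψQ S1 φ S2 ψ ∧
  resInterShift T1 T2 S1 φ S2 ψ SQ1 φQ SQ2 ψQ ≤ resDist T1 T2 S1 φ S2 ψ ∧
  resDist T1 T2 SQ1 φQ SQ2 ψQ < resDist T1 T2 S1 φ S2 ψ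

/-- Two partial interleavings are the same (same domains, agreeing maps on them). -/
def SameInter (T1 T2 : MergeTree)
    (S1 : Set T1.X) (φ : T1.X → T2.X) (S2 : Set T2.X) (ψ : T2.X → T1.X)
    (S1' : Set T1.X) (φ' : T1.X → T2.X) (S2' : Set T2.X) (ψ' : T2.X → T1.X) : Prop :=
  S1 = S1' ∧ S2 = S2' ∧ (∀ x ∈ S1, φ x = φ' x) ∧ (∀ y ∈ S2, ψ y = ψ' y)

/-- `Q` is a minimal `P`-augmentation: it does not (properly) extend any other
`P`-augmentation. -/
def IsMinimalAugmentation (T1 T2 : MergeTree)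
    (S1 : Set T1.X) (φ : T1.X → T2.X) (S2 : Set T2.X) (ψ : T2.X → T1.X)
    (SQ1 : Set T1.X) (φQ : T1.X → T2.X) (SQ2 : Set T2.X) (ψQ : T2.X → T1.X) : Prop :=
  IsAugmentation T1 T2 S1 φ S2 ψ SQ1 φQ SQ2 ψQ ∧
  ∀ SR1 φR SR2 ψR, IsAugmentation T1 T2 S1 φ S2 ψ SR1 φR SR2 ψR →
    InterExtends T1 T2 SQ1 φQ SQ2 ψQ SR1 φR SR2 ψR →
    SameInter T1 T2 SQ1 φQ SQ2 ψQ SR1 φR SR2 ψR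

/-- Domain of the relative difference of two partial maps. -/
def relDiffDom {X Y : Type} (SQ : Set X) (φQ : X → Y) (S : Set X) (φ : X → Y) : Set X :=
  SQ \ {x | x ∈ S ∧ φQ x = φ x}

/-- `P = (S1, φ, S2, ψ)` is dominant: the shift of each of its arrows strictly exceeds
`d_P(T₁, T₂)`. -/
def DominantInter (T1 T2 : MergeTree)
    (S1 : Set T1.X) (φ : T1.X → T2.X) (S2 : Set T2.X) (ψ : T2.X → T1.X) : Prop :=
  (∀ x ∈ S1, resDist T1 T2 S1 φ S2 ψ < ((T2.f (φ x) - T1.f x : ℝ) : EReal)) ∧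
  (∀ y ∈ S2, resDist T1 T2 S1 φ S2 ψ < ((T1.f (ψ y) - T2.f y : ℝ) : EReal))

/-- A partial interleaving is locally correct: for every restriction `R` of it,
`d_R(T₁, T₂) ≥ shift_R(P)`. -/
def LocallyCorrectPartial (T1 T2 : MergeTree)
    (S1 : Set T1.X) (φ : T1.X → T2.X) (S2 : Set T2.X) (ψ : T2.X → T1.X) : Prop :=
  ∀ S1' ⊆ S1, ∀ S2' ⊆ S2,
    resInterShift T1 T2 S1' φ S2' ψ S1 φ S2 ψ ≤ resDist T1 T2 S1' φ S2' ψ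

/-- A complete interleaving `(α, β)` is locally correct: for every restriction `R` of it,
`d_R(T₁, T₂) = shift_R(I)`. -/
def LocallyCorrect (T1 T2 : MergeTree) (α : T1.X → T2.X) (β : T2.X → T1.X) : Prop :=
  ∀ S1' : Set T1.X, ∀ S2' : Set T2.X,
    resDist T1 T2 S1' α S2' β = resInterShift T1 T2 S1' α S2' β univ α univ β

/-!
Dominance. An arrow of `Q` with shift at most `d_Q` cannot come from `P`, whose arrows have
shift `> d_P > d_Q`; but then deleting it from `Q` keeps the residual distance below `d_P`,
against the minimality of `Q`.

Local correctness. Fix a restriction `R` of `Q` and an arrow of `Q` outside `F[A_R]`. If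
`F[A_R]` contains every arrow of `P`, then `R ∪ P` has the same fan as `R`, hence the same
residual distance, and it lies between `P` and `Q`; minimality of `Q` bounds the shift of the
arrow by `d_R`. Otherwise, let `m` be the largest shift of an arrow of `P` outside `F[A_R]`;
the arrow has shift at most `m`, and `m ≤ d_R`. For the latter, a complete `R`-extension `I`
with `R`-residual shift `< m` extends the restriction `R₀` of `P` to the arrows it extends, and
local correctness of `P` gives `m ≤ d_{R₀} ≤ shift_{R₀}(I)`. But an arrow of `I` outside
`F[A_{R₀}]` either has small `R`-residual shift or lies in the fan of an arrow `a` of `R`; if `a`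
has shift `> d_P`, the lowest arrow of `P` whose fan contains `a` is not in `F[A_R]`, so `a` has
shift `< m`. As `R` is finite, all these shifts stay below some `t < m`, a contradiction.
-/

lemma exists_le_lt_forall_le_of_finite {α : Type*} [LinearOrder α] {s : Set α} (hs : s.Finite)
    {c m : α} (hcm : c < m) : ∃ t, c ≤ t ∧ t < m ∧ ∀ v ∈ s, v < m → v ≤ t := by
  obtain ⟨t, ht, hmax⟩ := exists_max_image (insert c {v | v ∈ s ∧ v < m}) id
    ((hs.subset (sep_subset _ _)).insert c) (insert_nonempty _ _)
  refine ⟨t, hmax c (mem_insert _ _), ?_, fun v hv hvm => hmax v (mem_insert_of_mem _ ⟨hv, hvm⟩)⟩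
  rcases ht with rfl | ht
  exacts [hcm, ht.2]

section Fan

variable {T1 T2 : MergeTree} {S S' : Set T1.X} {φ φ' α : T1.X → T2.X} {x x' : T1.X} {y : T2.X}

lemma inFan_self (hx : x ∈ S) (hf : T1.f x ≤ T2.f (φ x)) : InFan T1 T2 S φ x (φ x) :=
  ⟨hf, x, hx, rfl, T1.le_refl x⟩

lemma InFan.of_le (h : InFan T1 T2 S φ x y) (hxx' : T1.le x x') (hf : T1.f x' ≤ T2.f y) :
    InFan T1 T2 S φ x' y :=
  let ⟨_, w, hw, hφw, hwx⟩ := h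
  ⟨hf, w, hw, hφw, T1.le_trans _ _ _ hwx hxx'⟩

lemma InFan.mono (h : InFan T1 T2 S φ x y) (hS : S ⊆ S') (heq : EqOn φ' φ S) :
    InFan T1 T2 S' φ' x y :=
  let ⟨hf, w, hw, hφw, hwx⟩ := h
  ⟨hf, w, hS hw, (heq hw).trans hφw, hwx⟩

lemma InFan.of_forall_inFan (h : InFan T1 T2 S φ x y)
    (hS : ∀ w ∈ S, InFan T1 T2 S' φ' w (φ w)) : InFan T1 T2 S' φ' x y := by
  obtain ⟨hf, w, hw, rfl, hwx⟩ := h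
  exact (hS w hw).of_le hwx hf

lemma InFan.le_of_extends (h : InFan T1 T2 S φ x y) (hα : IsUpMap T1 T2 univ α)
    (hext : ∀ w ∈ S, T2.le (φ w) (α w)) : T2.le y (α x) := by
  obtain ⟨-, w, hw, rfl, hwx⟩ := h
  exact T2.le_trans _ _ _ (hext w hw) (hα.2 w trivial x trivial hwx)

lemma resArrowShift_of_inFan (h : InFan T1 T2 S φ x y) : resArrowShift T1 T2 S φ x y = 0 :=
  if_pos h

lemma resArrowShift_of_not_inFan (h : ¬ InFan T1 T2 S φ x y) :
    resArrowShift T1 T2 S φ x y = T2.f y - T1.f x :=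
  if_neg h

lemma resArrowShift_nonneg (hxy : T1.f x ≤ T2.f y) : 0 ≤ resArrowShift T1 T2 S φ x y := by
  unfold resArrowShift
  split_ifs <;> linarith

lemma resArrowShift_le_of_inFan_imp (hfan : InFan T1 T2 S φ x y → InFan T1 T2 S' φ' x y)
    (hxy : T1.f x ≤ T2.f y) : resArrowShift T1 T2 S' φ' x y ≤ resArrowShift T1 T2 S φ x y := by
  by_cases h : InFan T1 T2 S φ x y
  · rw [resArrowShift_of_inFan h, resArrowShift_of_inFan (hfan h)]
  · rw [resArrowShift_of_not_inFan h]
    unfold resArrowShift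
    split_ifs <;> linarith

lemma resArrowShift_diff_singleton_le (w : T1.X) (hxy : T1.f x ≤ T2.f y) :
    resArrowShift T1 T2 (S \ {w}) φ x y ≤
      max (resArrowShift T1 T2 S φ x y) (T2.f (φ w) - T1.f w) := by
  by_cases hS : InFan T1 T2 S φ x y
  · by_cases hW : InFan T1 T2 (S \ {w}) φ x y
    · rw [resArrowShift_of_inFan hW]
      exact le_max_of_le_left (resArrowShift_nonneg hxy)
    · obtain ⟨-, w', hw', rfl, hw'x⟩ := hS
      obtain rfl : w' = w := by_contra fun hne => hW ⟨hxy, w', ⟨hw', hne⟩, rfl, hw'x⟩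
      rw [resArrowShift_of_not_inFan hW]
      exact le_max_of_le_right (by linarith [T1.f_mono _ _ hw'x])
  · rw [resArrowShift_of_not_inFan hS,
      resArrowShift_of_not_inFan fun h => hS (h.mono sdiff_subset fun _ _ => rfl)]
    exact le_max_left _ _

lemma le_resMapShift (hx : x ∈ S') :
    ((resArrowShift T1 T2 S φ x (φ' x) : ℝ) : EReal) ≤ resMapShift T1 T2 S φ S' φ' :=
  le_sSup ⟨x, hx, rfl⟩

lemma resMapShift_le_iff {t : EReal} : resMapShift T1 T2 S φ S' φ' ≤ t ↔
    ∀ x ∈ S', ((resArrowShift T1 T2 S φ x (φ' x) : ℝ) : EReal) ≤ t := by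
  rw [resMapShift, sSup_le_iff, forall_mem_image]

lemma resMapShift_mono {S'' : Set T1.X} (h : S' ⊆ S'') :
    resMapShift T1 T2 S φ S' φ' ≤ resMapShift T1 T2 S φ S'' φ' :=
  sSup_le_sSup (image_mono h)

lemma shift_le_resMapShift (hx : x ∈ S') (h : ¬ InFan T1 T2 S φ x (φ' x)) :
    ((T2.f (φ' x) - T1.f x : ℝ) : EReal) ≤ resMapShift T1 T2 S φ S' φ' :=
  resArrowShift_of_not_inFan h ▸ le_resMapShift hx

lemma resMapShift_univ_nonneg (hα : IsUpMap T1 T2 univ α) :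
    0 ≤ resMapShift T1 T2 S φ univ α := by
  obtain ⟨x⟩ := T1.nonempty
  exact (EReal.coe_nonneg.2 (resArrowShift_nonneg (hα.1 x trivial))).trans
    (le_resMapShift (mem_univ x))

lemma resMapShift_diff_singleton_le (hα : IsUpMap T1 T2 univ α) (w : T1.X) :
    resMapShift T1 T2 (S \ {w}) φ univ α ≤
      max (resMapShift T1 T2 S φ univ α) ((T2.f (φ w) - T1.f w : ℝ) : EReal) := by
  refine resMapShift_le_iff.2 fun x hx => ?_
  calc _ ≤ ((max (resArrowShift T1 T2 S φ x (α x)) (T2.f (φ w) - T1.f w) : ℝ) : EReal) :=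
        EReal.coe_le_coe_iff.2 (resArrowShift_diff_singleton_le w (hα.1 x hx))
    _ = _ := EReal.coe_strictMono.monotone.map_max
    _ ≤ _ := max_le_max_right _ (le_resMapShift hx)

end Fan

section ResDist

variable {T1 T2 : MergeTree} {S1 S1' : Set T1.X} {φ φ' : T1.X → T2.X} {S2 S2' : Set T2.X}
  {ψ ψ' : T2.X → T1.X} {α : T1.X → T2.X} {β : T2.X → T1.X}

lemma IsPartialInterleaving.mono (h : IsPartialInterleaving T1 T2 S1 φ S2 ψ) (h1 : S1' ⊆ S1)
    (h2 : S2' ⊆ S2) : IsPartialInterleaving T1 T2 S1' φ S2' ψ :=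
  ⟨⟨fun x hx => h.1.1 x (h1 hx), fun a ha b hb => h.1.2 a (h1 ha) b (h1 hb)⟩,
    ⟨fun y hy => h.2.1.1 y (h2 hy), fun a ha b hb => h.2.1.2 a (h2 ha) b (h2 hb)⟩,
    fun x hx y hy => h.2.2.1 x (h1 hx) y (h2 hy), fun x hx y hy => h.2.2.2 x (h1 hx) y (h2 hy)⟩

lemma IsCompleteExtension.mono (h : IsCompleteExtension T1 T2 S1 φ S2 ψ α β) (h1 : S1' ⊆ S1)
    (h2 : S2' ⊆ S2) : IsCompleteExtension T1 T2 S1' φ S2' ψ α β :=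
  ⟨h.1, ⟨subset_univ _, fun x hx => h.2.1.2 x (h1 hx)⟩,
    ⟨subset_univ _, fun y hy => h.2.2.2 y (h2 hy)⟩⟩

lemma resDist_le_resInterShift (h : IsCompleteExtension T1 T2 S1 φ S2 ψ α β) :
    resDist T1 T2 S1 φ S2 ψ ≤ resInterShift T1 T2 S1 φ S2 ψ univ α univ β :=
  sInf_le ⟨α, β, h, rfl⟩

lemma le_resDist {t : EReal} (h : ∀ α β, IsCompleteExtension T1 T2 S1 φ S2 ψ α β →
    t ≤ resInterShift T1 T2 S1 φ S2 ψ univ α univ β) : t ≤ resDist T1 T2 S1 φ S2 ψ :=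
  le_sInf <| by
    rintro _ ⟨α, β, hc, rfl⟩
    exact h α β hc

lemma exists_resInterShift_lt_of_resDist_lt {a : EReal} (h : resDist T1 T2 S1 φ S2 ψ < a) :
    ∃ α β, IsCompleteExtension T1 T2 S1 φ S2 ψ α β ∧
      resInterShift T1 T2 S1 φ S2 ψ univ α univ β < a := by
  obtain ⟨_, ⟨α, β, hc, rfl⟩, hlt⟩ := sInf_lt_iff.1 h
  exact ⟨α, β, hc, hlt⟩

lemma resDist_nonneg : 0 ≤ resDist T1 T2 S1 φ S2 ψ :=
  le_resDist fun _ _ hc => (resMapShift_univ_nonneg hc.1.1).trans (le_max_left _ _)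

lemma resDist_le_of_inFan (h1 : ∀ x ∈ S1, InFan T1 T2 S1' φ' x (φ x))
    (h1' : ∀ x ∈ S1', InFan T1 T2 S1 φ x (φ' x)) (h2 : ∀ y ∈ S2, InFan T2 T1 S2' ψ' y (ψ y))
    (h2' : ∀ y ∈ S2', InFan T2 T1 S2 ψ y (ψ' y)) :
    resDist T1 T2 S1 φ S2 ψ ≤ resDist T1 T2 S1' φ' S2' ψ' := by
  refine le_resDist fun α β hc => ?_
  have hc' : IsCompleteExtension T1 T2 S1 φ S2 ψ α β :=
    ⟨hc.1, ⟨subset_univ _, fun x hx => (h1 x hx).le_of_extends hc.1.1 hc.2.1.2⟩,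
      ⟨subset_univ _, fun y hy => (h2 y hy).le_of_extends hc.1.2.1 hc.2.2.2⟩⟩
  refine (resDist_le_resInterShift hc').trans (max_le_max ?_ ?_)
  · refine resMapShift_le_iff.2 fun x _ => (EReal.coe_le_coe_iff.2 ?_).trans
      (le_resMapShift (mem_univ x))
    exact resArrowShift_le_of_inFan_imp (·.of_forall_inFan h1') (hc.1.1.1 x trivial)
  · refine resMapShift_le_iff.2 fun y _ => (EReal.coe_le_coe_iff.2 ?_).trans
      (le_resMapShift (mem_univ y))
    exact resArrowShift_le_of_inFan_imp (·.of_forall_inFan h2') (hc.1.2.1.1 y trivial)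

end ResDist

section Swap

variable {T1 T2 : MergeTree} {S1 S1' : Set T1.X} {φ φ' : T1.X → T2.X} {S2 S2' : Set T2.X}
  {ψ ψ' : T2.X → T1.X} {α : T1.X → T2.X} {β : T2.X → T1.X}

lemma IsPartialInterleaving.swap (h : IsPartialInterleaving T1 T2 S1 φ S2 ψ) :
    IsPartialInterleaving T2 T1 S2 ψ S1 φ :=
  ⟨h.2.1, h.1, fun y hy x hx => h.2.2.2 x hx y hy, fun y hy x hx => h.2.2.1 x hx y hy⟩

lemma InterExtends.swap (h : InterExtends T1 T2 S1 φ S2 ψ S1' φ' S2' ψ') :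
    InterExtends T2 T1 S2 ψ S1 φ S2' ψ' S1' φ' :=
  ⟨h.2, h.1⟩

lemma IsCompleteExtension.swap (h : IsCompleteExtension T1 T2 S1 φ S2 ψ α β) :
    IsCompleteExtension T2 T1 S2 ψ S1 φ β α :=
  ⟨IsPartialInterleaving.swap h.1, h.2.swap⟩

lemma SameInter.swap (h : SameInter T1 T2 S1 φ S2 ψ S1' φ' S2' ψ') :
    SameInter T2 T1 S2 ψ S1 φ S2' ψ' S1' φ' :=
  ⟨h.2.1, h.1, h.2.2.2, h.2.2.1⟩

variable (T1 T2 S1 φ S2 ψ) in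
lemma resInterShift_comm (S1' : Set T1.X) (φ' : T1.X → T2.X) (S2' : Set T2.X)
    (ψ' : T2.X → T1.X) :
    resInterShift T1 T2 S1 φ S2 ψ S1' φ' S2' ψ' = resInterShift T2 T1 S2 ψ S1 φ S2' ψ' S1' φ' :=
  max_comm _ _

variable (T1 T2 S1 φ S2 ψ) in
lemma resDist_comm : resDist T1 T2 S1 φ S2 ψ = resDist T2 T1 S2 ψ S1 φ := by
  unfold resDist
  congr 1
  ext d
  constructor
  · rintro ⟨α, β, hc, rfl⟩
    exact ⟨β, α, hc.swap, resInterShift_comm ..⟩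
  · rintro ⟨β, α, hc, rfl⟩
    exact ⟨α, β, hc.swap, (resInterShift_comm ..).symm⟩

lemma IsAugmentation.swap (h : IsAugmentation T1 T2 S1 φ S2 ψ S1' φ' S2' ψ') :
    IsAugmentation T2 T1 S2 ψ S1 φ S2' ψ' S1' φ' := by
  obtain ⟨hQ, hext, hshift, hd⟩ := h
  refine ⟨hQ.swap, hext.swap, ?_, ?_⟩
  · rwa [← resInterShift_comm, ← resDist_comm]
  · rwa [← resDist_comm T1 T2 S1', ← resDist_comm T1 T2 S1]

lemma IsMinimalAugmentation.swap (h : IsMinimalAugmentation T1 T2 S1 φ S2 ψ S1' φ' S2' ψ') :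
    IsMinimalAugmentation T2 T1 S2 ψ S1 φ S2' ψ' S1' φ' :=
  ⟨h.1.swap, fun _ _ _ _ hR hext => (h.2 _ _ _ _ hR.swap hext.swap).swap⟩

lemma DominantInter.swap (h : DominantInter T1 T2 S1 φ S2 ψ) : DominantInter T2 T1 S2 ψ S1 φ := by
  unfold DominantInter
  rw [← resDist_comm]
  exact ⟨h.2, h.1⟩

lemma LocallyCorrectPartial.swap (h : LocallyCorrectPartial T1 T2 S1 φ S2 ψ) :
    LocallyCorrectPartial T2 T1 S2 ψ S1 φ := fun S2' h2 S1' h1 => by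
  rw [← resInterShift_comm, ← resDist_comm]
  exact h S1' h1 S2' h2

end Swap

section Augmentation

variable {T1 T2 : MergeTree} {S1 : Set T1.X} {φ : T1.X → T2.X} {S2 : Set T2.X}
  {ψ : T2.X → T1.X} {SQ1 : Set T1.X} {φQ : T1.X → T2.X} {SQ2 : Set T2.X} {ψQ : T2.X → T1.X}
  {x : T1.X}

lemma IsAugmentation.shift_le_resDist_of_not_inFan
    (hQ : IsAugmentation T1 T2 S1 φ S2 ψ SQ1 φQ SQ2 ψQ) (hx : x ∈ SQ1)
    (h : ¬ InFan T1 T2 S1 φ x (φQ x)) :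
    ((T2.f (φQ x) - T1.f x : ℝ) : EReal) ≤ resDist T1 T2 S1 φ S2 ψ :=
  (shift_le_resMapShift hx h).trans ((le_max_left _ _).trans hQ.2.2.1)

lemma IsAugmentation.inFan_of_resDist_lt (hQ : IsAugmentation T1 T2 S1 φ S2 ψ SQ1 φQ SQ2 ψQ)
    (hx : x ∈ SQ1) (h : resDist T1 T2 S1 φ S2 ψ < ((T2.f (φQ x) - T1.f x : ℝ) : EReal)) :
    InFan T1 T2 S1 φ x (φQ x) :=
  by_contra fun hn => (hQ.shift_le_resDist_of_not_inFan hx hn).not_gt h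

lemma IsAugmentation.eqOn (hP : IsUpMap T1 T2 S1 φ)
    (hQ : IsAugmentation T1 T2 S1 φ S2 ψ SQ1 φQ SQ2 ψQ)
    (hdom : ∀ x ∈ S1, resDist T1 T2 S1 φ S2 ψ < ((T2.f (φ x) - T1.f x : ℝ) : EReal)) :
    EqOn φQ φ S1 := by
  intro x hx
  have hle : T2.le (φ x) (φQ x) := hQ.2.1.1.2 x hx
  have hd : resDist T1 T2 S1 φ S2 ψ < ((T2.f (φQ x) - T1.f x : ℝ) : EReal) :=
    (hdom x hx).trans_le (EReal.coe_le_coe_iff.2 (by linarith [T2.f_mono _ _ hle]))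
  obtain ⟨-, w, hw, hφw, hwx⟩ := hQ.inFan_of_resDist_lt (hQ.2.1.1.1 hx) hd
  exact T2.le_antisymm _ _ (hφw ▸ hP.2 w hw x hx hwx) hle

lemma IsMinimalAugmentation.eq_of_resDist_lt
    (hQ : IsMinimalAugmentation T1 T2 S1 φ S2 ψ SQ1 φQ SQ2 ψQ) {W1 : Set T1.X} {W2 : Set T2.X}
    (hW1 : S1 ⊆ W1) (hW1Q : W1 ⊆ SQ1) (hW2 : S2 ⊆ W2) (hW2Q : W2 ⊆ SQ2)
    (hd : resDist T1 T2 W1 φQ W2 ψQ < resDist T1 T2 S1 φ S2 ψ) : W1 = SQ1 ∧ W2 = SQ2 := by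
  have hW : IsAugmentation T1 T2 S1 φ S2 ψ W1 φQ W2 ψQ :=
    ⟨hQ.1.1.mono hW1Q hW2Q, ⟨⟨hW1, hQ.1.2.1.1.2⟩, ⟨hW2, hQ.1.2.1.2.2⟩⟩,
      (max_le_max (resMapShift_mono hW1Q) (resMapShift_mono hW2Q)).trans hQ.1.2.2.1, hd⟩
  obtain ⟨h1, h2, -⟩ := hQ.2 W1 φQ W2 ψQ hW
    ⟨⟨hW1Q, fun _ _ => T2.le_refl _⟩, ⟨hW2Q, fun _ _ => T1.le_refl _⟩⟩
  exact ⟨h1.symm, h2.symm⟩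

lemma IsMinimalAugmentation.resDist_lt_shift (hP : IsUpMap T1 T2 S1 φ)
    (hQ : IsMinimalAugmentation T1 T2 S1 φ S2 ψ SQ1 φQ SQ2 ψQ)
    (hdom : DominantInter T1 T2 S1 φ S2 ψ) (hx : x ∈ SQ1) :
    resDist T1 T2 SQ1 φQ SQ2 ψQ < ((T2.f (φQ x) - T1.f x : ℝ) : EReal) := by
  have hQP := hQ.1.2.2.2
  by_contra! hle
  by_cases hxP : x ∈ S1
  · rw [hQ.1.eqOn hP hdom.1 hxP] at hle
    exact (((hdom.1 x hxP).trans_le hle).trans hQP).false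
  obtain ⟨α, β, hc, hlt⟩ := exists_resInterShift_lt_of_resDist_lt hQP
  have hd : resDist T1 T2 (SQ1 \ {x}) φQ SQ2 ψQ < resDist T1 T2 S1 φ S2 ψ := calc
    _ ≤ resInterShift T1 T2 (SQ1 \ {x}) φQ SQ2 ψQ univ α univ β :=
      resDist_le_resInterShift (hc.mono sdiff_subset subset_rfl)
    _ ≤ max (resInterShift T1 T2 SQ1 φQ SQ2 ψQ univ α univ β)
        ((T2.f (φQ x) - T1.f x : ℝ) : EReal) :=
      max_le ((resMapShift_diff_singleton_le hc.1.1 x).trans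
          (max_le_max_right _ (le_max_left _ _)))
        ((le_max_right _ _).trans (le_max_left _ _))
    _ < _ := max_lt hlt (hle.trans_lt hQP)
  have hsub : S1 ⊆ SQ1 \ {x} := fun w hw => ⟨hQ.1.2.1.1.1 hw, fun h => hxP (h ▸ hw)⟩
  rw [← (hQ.eq_of_resDist_lt hsub sdiff_subset hQ.1.2.1.2.1 subset_rfl hd).1] at hx
  exact hx.2 rfl

lemma IsMinimalAugmentation.shift_le_resDist_of_not_inFan
    (hQ : IsMinimalAugmentation T1 T2 S1 φ S2 ψ SQ1 φQ SQ2 ψQ) (heq : EqOn φQ φ S1)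
    {W1 : Set T1.X} {W2 : Set T2.X} (hW1 : S1 ⊆ W1) (hW1Q : W1 ⊆ SQ1) (hW2 : S2 ⊆ W2)
    (hW2Q : W2 ⊆ SQ2) (hx : x ∈ SQ1) (hfan : ¬ InFan T1 T2 W1 φQ x (φQ x)) :
    ((T2.f (φQ x) - T1.f x : ℝ) : EReal) ≤ resDist T1 T2 W1 φQ W2 ψQ := by
  by_contra! hlt
  have hdP := hQ.1.shift_le_resDist_of_not_inFan hx fun h => hfan (h.mono hW1 heq)
  have hW := hQ.eq_of_resDist_lt hW1 hW1Q hW2 hW2Q (hlt.trans_le hdP)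
  exact hfan (inFan_self (hW.1 ▸ hx) (hQ.1.1.1.1 x hx))

end Augmentation

def extendedDom (T1 T2 : MergeTree) (S : Set T1.X) (φ α : T1.X → T2.X) : Set T1.X :=
  {x | x ∈ S ∧ T2.le (φ x) (α x)}

section LocallyCorrect

variable {T1 T2 : MergeTree} {S1 : Set T1.X} {φ : T1.X → T2.X} {S2 : Set T2.X}
  {ψ : T2.X → T1.X} {SQ1 : Set T1.X} {φQ : T1.X → T2.X} {SQ2 : Set T2.X} {ψQ : T2.X → T1.X}
  {S1' : Set T1.X} {S2' : Set T2.X} {α : T1.X → T2.X} {m : ℝ}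

lemma IsAugmentation.not_inFan_extendedDom (hP : IsUpMap T1 T2 S1 φ)
    (hQ : IsAugmentation T1 T2 S1 φ S2 ψ SQ1 φQ SQ2 ψQ) (h1 : S1' ⊆ SQ1)
    (hα : IsUpMap T1 T2 univ α) {x : T1.X} (hx : x ∈ S1)
    (hdx : resDist T1 T2 S1 φ S2 ψ < ((T2.f (φ x) - T1.f x : ℝ) : EReal))
    (hunc : ¬ InFan T1 T2 S1' φQ x (φ x))
    (hα_lt : resMapShift T1 T2 S1' φQ univ α < ((T2.f (φ x) - T1.f x : ℝ) : EReal)) :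
    ¬ InFan T1 T2 (extendedDom T1 T2 S1 φ α) φ x (φ x) := by
  rintro ⟨-, w, ⟨hw, hwα⟩, hφw, hwx⟩
  have hφα : T2.le (φ x) (α x) := hφw ▸ T2.le_trans _ _ _ hwα (hα.2 w trivial x trivial hwx)
  have hR : InFan T1 T2 S1' φQ x (α x) := by
    by_contra h
    refine (shift_le_resMapShift (mem_univ x) h).not_gt (hα_lt.trans_le ?_)
    exact EReal.coe_le_coe_iff.2 (by linarith [T2.f_mono _ _ hφα])
  obtain ⟨z, hz, hφz, hzx⟩ := hR.2
  obtain ⟨-, v, hv, hφv, hvz⟩ := hQ.inFan_of_resDist_lt (h1 hz) <| hdx.trans_le <|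
    EReal.coe_le_coe_iff.2 (by rw [hφz]; linarith [T2.f_mono _ _ hφα, T1.f_mono _ _ hzx])
  have hαφ : T2.le (α x) (φ x) := hφz ▸ hφv ▸ hP.2 v hv x hx (T1.le_trans _ _ _ hvz hzx)
  exact hunc (by rw [T2.le_antisymm _ _ hφα hαφ]; exact hR)

lemma IsAugmentation.shift_lt_of_not_inFan_extendedDom (hfin : S1.Finite)
    (hQ : IsAugmentation T1 T2 S1 φ S2 ψ SQ1 φQ SQ2 ψQ)
    (hdom : ∀ x ∈ S1, resDist T1 T2 S1 φ S2 ψ < ((T2.f (φ x) - T1.f x : ℝ) : EReal))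
    (h1 : S1' ⊆ SQ1) (hext : ∀ z ∈ S1', T2.le (φQ z) (α z))
    (hdm : resDist T1 T2 S1 φ S2 ψ < m)
    (hm : ∀ x ∈ S1, ¬ InFan T1 T2 S1' φQ x (φ x) → T2.f (φ x) - T1.f x ≤ m)
    {z : T1.X} (hz : z ∈ S1') (hfan : ¬ InFan T1 T2 (extendedDom T1 T2 S1 φ α) φ z (φQ z)) :
    T2.f (φQ z) - T1.f z < m := by
  by_cases hdz : ((T2.f (φQ z) - T1.f z : ℝ) : EReal) ≤ resDist T1 T2 S1 φ S2 ψ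
  · exact EReal.coe_lt_coe_iff.1 (hdz.trans_lt hdm)
  have hne : {w | w ∈ S1 ∧ T1.le w z ∧ φ w = φQ z}.Nonempty := by
    obtain ⟨-, w, hw, hφw, hwz⟩ := hQ.inFan_of_resDist_lt (h1 hz) (not_le.1 hdz)
    exact ⟨w, hw, hwz, hφw⟩
  obtain ⟨w, ⟨hw, hwz, hφw⟩, hmin⟩ := exists_min_image _ T1.f (hfin.subset (sep_subset _ _)) hne
  -- An arrow of `R` covering `w` lies in the fan of an arrow of `P` below `w`; minimality of
  -- `w` makes both of them `w` itself, which then belongs to `R₀`.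
  have hunc : ¬ InFan T1 T2 S1' φQ w (φ w) := by
    rintro ⟨-, v, hv, hφv, hvw⟩
    obtain ⟨-, u, hu, hφu, huv⟩ := hQ.inFan_of_resDist_lt (h1 hv) <| (hdom w hw).trans_le <|
      EReal.coe_le_coe_iff.2 (by rw [hφv]; linarith [T1.f_mono _ _ hvw])
    have hfu := hmin u ⟨hu, T1.le_trans _ _ _ huv (T1.le_trans _ _ _ hvw hwz),
      hφu.trans (hφv.trans hφw)⟩
    obtain rfl : v = w := T1.f_strictMono _ _ hvw
      (le_antisymm (T1.f_mono _ _ hvw) (hfu.trans (T1.f_mono _ _ huv)))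
    exact hfan ⟨hQ.1.1.1 z (h1 hz), v, ⟨hw, hφv ▸ hext v hv⟩, hφw, hwz⟩
  have hwz' : w ≠ z := by
    rintro rfl
    exact hunc ⟨hφw ▸ hQ.1.1.1 w (h1 hz), w, hz, hφw.symm, T1.le_refl w⟩
  have hfw : T1.f w < T1.f z :=
    lt_of_le_of_ne (T1.f_mono _ _ hwz) fun h => hwz' (T1.f_strictMono _ _ hwz h)
  rw [← hφw]
  linarith [hm w hw hunc]

lemma IsAugmentation.resArrowShift_extendedDom_le (hfin : S1.Finite)
    (hQ : IsAugmentation T1 T2 S1 φ S2 ψ SQ1 φQ SQ2 ψQ)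
    (hdom : ∀ x ∈ S1, resDist T1 T2 S1 φ S2 ψ < ((T2.f (φ x) - T1.f x : ℝ) : EReal))
    (h1 : S1' ⊆ SQ1) (hα : IsUpMap T1 T2 univ α) (hext : ∀ z ∈ S1', T2.le (φQ z) (α z))
    (hdm : resDist T1 T2 S1 φ S2 ψ < m)
    (hm : ∀ x ∈ S1, ¬ InFan T1 T2 S1' φQ x (φ x) → T2.f (φ x) - T1.f x ≤ m) {t : EReal}
    (htR : resMapShift T1 T2 S1' φQ univ α ≤ t)
    (htQ : ∀ z ∈ S1', T2.f (φQ z) - T1.f z < m → ((T2.f (φQ z) - T1.f z : ℝ) : EReal) ≤ t)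
    (x : T1.X) :
    ((resArrowShift T1 T2 (extendedDom T1 T2 S1 φ α) φ x (α x) : ℝ) : EReal) ≤ t := by
  by_cases hfan : InFan T1 T2 (extendedDom T1 T2 S1 φ α) φ x (α x)
  · rw [resArrowShift_of_inFan hfan, EReal.coe_zero]
    exact (resMapShift_univ_nonneg hα).trans htR
  rw [resArrowShift_of_not_inFan hfan]
  by_cases hR : InFan T1 T2 S1' φQ x (α x)
  · obtain ⟨-, z, hz, hφz, hzx⟩ := hR
    have hz_lt := hQ.shift_lt_of_not_inFan_extendedDom hfin hdom h1 hext hdm hm hz fun h =>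
      hfan (hφz ▸ h.of_le hzx (hφz ▸ hα.1 x trivial))
    refine le_trans (EReal.coe_le_coe_iff.2 ?_) (htQ z hz hz_lt)
    rw [hφz]
    linarith [T1.f_mono _ _ hzx]
  · exact (shift_le_resMapShift (mem_univ x) hR).trans htR

lemma IsAugmentation.le_resDist_of_uncovered (hP : IsPartialInterleaving T1 T2 S1 φ S2 ψ)
    (hfin : S1.Finite ∧ S2.Finite) (hQfin : SQ1.Finite ∧ SQ2.Finite)
    (hQ : IsAugmentation T1 T2 S1 φ S2 ψ SQ1 φQ SQ2 ψQ) (hdom : DominantInter T1 T2 S1 φ S2 ψ)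
    (hlc : LocallyCorrectPartial T1 T2 S1 φ S2 ψ) (h1 : S1' ⊆ SQ1) (h2 : S2' ⊆ SQ2)
    (hm1 : ∀ x ∈ S1, ¬ InFan T1 T2 S1' φQ x (φ x) → T2.f (φ x) - T1.f x ≤ m)
    (hm2 : ∀ y ∈ S2, ¬ InFan T2 T1 S2' ψQ y (ψ y) → T1.f (ψ y) - T2.f y ≤ m)
    {x : T1.X} (hx : x ∈ S1) (hunc : ¬ InFan T1 T2 S1' φQ x (φ x))
    (hmx : T2.f (φ x) - T1.f x = m) :
    (m : EReal) ≤ resDist T1 T2 S1' φQ S2' ψQ := by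
  refine le_resDist fun α β hc => ?_
  by_contra! hlt
  have hdm : resDist T1 T2 S1 φ S2 ψ < m := hmx ▸ hdom.1 x hx
  obtain ⟨t, hct, htm, ht⟩ := exists_le_lt_forall_le_of_finite
    (((hQfin.1.subset h1).image fun z => ((T2.f (φQ z) - T1.f z : ℝ) : EReal)).union
      ((hQfin.2.subset h2).image fun y => ((T1.f (ψQ y) - T2.f y : ℝ) : EReal))) hlt
  have hA1 : resMapShift T1 T2 (extendedDom T1 T2 S1 φ α) φ univ α ≤ t :=
    resMapShift_le_iff.2 fun x' _ => hQ.resArrowShift_extendedDom_le hfin.1 hdom.1 h1 hc.1.1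
      hc.2.1.2 hdm hm1 ((le_max_left _ _).trans hct)
      (fun z hz hzm => ht _ (Or.inl ⟨z, hz, rfl⟩) (EReal.coe_lt_coe_iff.2 hzm)) x'
  have hA2 : resMapShift T2 T1 (extendedDom T2 T1 S2 ψ β) ψ univ β ≤ t :=
    resMapShift_le_iff.2 fun y' _ => hQ.swap.resArrowShift_extendedDom_le hfin.2 hdom.swap.1
      h2 hc.1.2.1 hc.2.2.2 (by rwa [← resDist_comm]) hm2 ((le_max_right _ _).trans hct)
      (fun y hy hym => ht _ (Or.inr ⟨y, hy, rfl⟩) (EReal.coe_lt_coe_iff.2 hym)) y'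
  have hc₀ : IsCompleteExtension T1 T2 (extendedDom T1 T2 S1 φ α) φ
      (extendedDom T2 T1 S2 ψ β) ψ α β :=
    ⟨hc.1, ⟨subset_univ _, fun _ h => h.2⟩, ⟨subset_univ _, fun _ h => h.2⟩⟩
  have hx₀ := hQ.not_inFan_extendedDom hP.1 h1 hc.1.1 hx (hdom.1 x hx) hunc
    (hmx ▸ (le_max_left _ _).trans_lt hlt)
  refine htm.not_ge ?_
  calc (m : EReal) = ((T2.f (φ x) - T1.f x : ℝ) : EReal) := by rw [hmx]
    _ ≤ resMapShift T1 T2 (extendedDom T1 T2 S1 φ α) φ S1 φ := shift_le_resMapShift hx hx₀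
    _ ≤ resInterShift T1 T2 (extendedDom T1 T2 S1 φ α) φ (extendedDom T2 T1 S2 ψ β) ψ
        S1 φ S2 ψ := le_max_left _ _
    _ ≤ resDist T1 T2 (extendedDom T1 T2 S1 φ α) φ (extendedDom T2 T1 S2 ψ β) ψ :=
      hlc _ (sep_subset _ _) _ (sep_subset _ _)
    _ ≤ resInterShift T1 T2 (extendedDom T1 T2 S1 φ α) φ (extendedDom T2 T1 S2 ψ β) ψ
        univ α univ β := resDist_le_resInterShift hc₀
    _ ≤ t := max_le hA1 hA2

lemma IsAugmentation.exists_le_resDist_of_not_forall_inFan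
    (hP : IsPartialInterleaving T1 T2 S1 φ S2 ψ) (hfin : S1.Finite ∧ S2.Finite)
    (hQfin : SQ1.Finite ∧ SQ2.Finite) (hQ : IsAugmentation T1 T2 S1 φ S2 ψ SQ1 φQ SQ2 ψQ)
    (hdom : DominantInter T1 T2 S1 φ S2 ψ) (hlc : LocallyCorrectPartial T1 T2 S1 φ S2 ψ)
    (h1 : S1' ⊆ SQ1) (h2 : S2' ⊆ SQ2)
    (hunc : ¬ ((∀ x ∈ S1, InFan T1 T2 S1' φQ x (φ x)) ∧ ∀ y ∈ S2, InFan T2 T1 S2' ψQ y (ψ y))) :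
    ∃ m : ℝ, resDist T1 T2 S1 φ S2 ψ < m ∧ (m : EReal) ≤ resDist T1 T2 S1' φQ S2' ψQ ∧
      ∀ x ∈ S1, ¬ InFan T1 T2 S1' φQ x (φ x) → T2.f (φ x) - T1.f x ≤ m := by
  set U1 := {x | x ∈ S1 ∧ ¬ InFan T1 T2 S1' φQ x (φ x)}
  set U2 := {y | y ∈ S2 ∧ ¬ InFan T2 T1 S2' ψQ y (ψ y)}
  have hne :
      ((fun x => T2.f (φ x) - T1.f x) '' U1 ∪ (fun y => T1.f (ψ y) - T2.f y) '' U2).Nonempty := by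
    simp only [not_and_or, not_forall, exists_prop] at hunc
    rcases hunc with ⟨x, hx, hxu⟩ | ⟨y, hy, hyu⟩
    exacts [⟨_, Or.inl ⟨x, ⟨hx, hxu⟩, rfl⟩⟩, ⟨_, Or.inr ⟨y, ⟨hy, hyu⟩, rfl⟩⟩]
  obtain ⟨m, hmU, hmax⟩ := exists_max_image _ id (((hfin.1.subset (sep_subset _ _)).image _).union
    ((hfin.2.subset (sep_subset _ _)).image _)) hne
  have hm1 : ∀ x ∈ S1, ¬ InFan T1 T2 S1' φQ x (φ x) → T2.f (φ x) - T1.f x ≤ m :=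
    fun x hx hxu => hmax _ (Or.inl ⟨x, ⟨hx, hxu⟩, rfl⟩)
  have hm2 : ∀ y ∈ S2, ¬ InFan T2 T1 S2' ψQ y (ψ y) → T1.f (ψ y) - T2.f y ≤ m :=
    fun y hy hyu => hmax _ (Or.inr ⟨y, ⟨hy, hyu⟩, rfl⟩)
  refine ⟨m, ?_, ?_, hm1⟩
  · rcases hmU with ⟨x, ⟨hx, -⟩, rfl⟩ | ⟨y, ⟨hy, -⟩, rfl⟩
    exacts [hdom.1 x hx, hdom.2 y hy]
  · rcases hmU with ⟨x, ⟨hx, hxu⟩, hmx⟩ | ⟨y, ⟨hy, hyu⟩, hmy⟩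
    · exact hQ.le_resDist_of_uncovered hP hfin hQfin hdom hlc h1 h2 hm1 hm2 hx hxu hmx
    · rw [resDist_comm]
      exact hQ.swap.le_resDist_of_uncovered hP.swap hfin.symm hQfin.symm hdom.swap hlc.swap h2 h1
        hm2 hm1 hy hyu hmy

lemma IsMinimalAugmentation.shift_le_resDist_of_forall_inFan
    (hP : IsPartialInterleaving T1 T2 S1 φ S2 ψ)
    (hQ : IsMinimalAugmentation T1 T2 S1 φ S2 ψ SQ1 φQ SQ2 ψQ)
    (hdom : DominantInter T1 T2 S1 φ S2 ψ) (h1 : S1' ⊆ SQ1) (h2 : S2' ⊆ SQ2)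
    (hcov1 : ∀ x ∈ S1, InFan T1 T2 S1' φQ x (φ x)) (hcov2 : ∀ y ∈ S2, InFan T2 T1 S2' ψQ y (ψ y))
    {x : T1.X} (hx : x ∈ SQ1) (hfan : ¬ InFan T1 T2 S1' φQ x (φQ x)) :
    ((T2.f (φQ x) - T1.f x : ℝ) : EReal) ≤ resDist T1 T2 S1' φQ S2' ψQ := by
  have heq1 := hQ.1.eqOn hP.1 hdom.1
  have heq2 := hQ.1.swap.eqOn hP.2.1 hdom.swap.1
  have hW1 : ∀ w ∈ S1' ∪ S1, InFan T1 T2 S1' φQ w (φQ w) := by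
    rintro w (hw | hw)
    · exact inFan_self hw (hQ.1.1.1.1 w (h1 hw))
    · rw [heq1 hw]; exact hcov1 w hw
  have hW2 : ∀ w ∈ S2' ∪ S2, InFan T2 T1 S2' ψQ w (ψQ w) := by
    rintro w (hw | hw)
    · exact inFan_self hw (hQ.1.1.2.1.1 w (h2 hw))
    · rw [heq2 hw]; exact hcov2 w hw
  calc _ ≤ resDist T1 T2 (S1' ∪ S1) φQ (S2' ∪ S2) ψQ :=
        hQ.shift_le_resDist_of_not_inFan heq1 subset_union_right (union_subset h1 hQ.1.2.1.1.1)
          subset_union_right (union_subset h2 hQ.1.2.1.2.1) hx fun h =>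
            hfan (h.of_forall_inFan hW1)
    _ ≤ _ := resDist_le_of_inFan hW1
        (fun w hw => inFan_self (subset_union_left hw) (hQ.1.1.1.1 w (h1 hw))) hW2
        (fun w hw => inFan_self (subset_union_left hw) (hQ.1.1.2.1.1 w (h2 hw)))

lemma IsMinimalAugmentation.resMapShift_le_resDist (hP : IsPartialInterleaving T1 T2 S1 φ S2 ψ)
    (hfin : S1.Finite ∧ S2.Finite) (hQfin : SQ1.Finite ∧ SQ2.Finite)
    (hQ : IsMinimalAugmentation T1 T2 S1 φ S2 ψ SQ1 φQ SQ2 ψQ)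
    (hdom : DominantInter T1 T2 S1 φ S2 ψ) (hlc : LocallyCorrectPartial T1 T2 S1 φ S2 ψ)
    (h1 : S1' ⊆ SQ1) (h2 : S2' ⊆ SQ2) :
    resMapShift T1 T2 S1' φQ SQ1 φQ ≤ resDist T1 T2 S1' φQ S2' ψQ := by
  refine resMapShift_le_iff.2 fun x hx => ?_
  by_cases hfan : InFan T1 T2 S1' φQ x (φQ x)
  · rw [resArrowShift_of_inFan hfan, EReal.coe_zero]
    exact resDist_nonneg
  rw [resArrowShift_of_not_inFan hfan]
  by_cases hcov : (∀ x ∈ S1, InFan T1 T2 S1' φQ x (φ x)) ∧ ∀ y ∈ S2, InFan T2 T1 S2' ψQ y (ψ y)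
  · exact hQ.shift_le_resDist_of_forall_inFan hP hdom h1 h2 hcov.1 hcov.2 hx hfan
  obtain ⟨m, hdm, hmR, hm⟩ :=
    hQ.1.exists_le_resDist_of_not_forall_inFan hP hfin hQfin hdom hlc h1 h2 hcov
  refine le_trans ?_ hmR
  by_cases hxP : InFan T1 T2 S1 φ x (φQ x)
  · obtain ⟨-, w, hw, hφw, hwx⟩ := hxP
    have hwu : ¬ InFan T1 T2 S1' φQ w (φ w) := fun h =>
      hfan (hφw ▸ h.of_le hwx (hφw ▸ hQ.1.1.1.1 x hx))
    have := hm w hw hwu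
    exact EReal.coe_le_coe_iff.2 (by rw [← hφw]; linarith [T1.f_mono _ _ hwx])
  · exact (hQ.1.shift_le_resDist_of_not_inFan hx hxP).trans hdm.le

end LocallyCorrect

theorem minimal_augmentation_dominant_locallyCorrect_general (T1 T2 : MergeTree)
    (S1 : Set T1.X) (φ : T1.X → T2.X) (S2 : Set T2.X) (ψ : T2.X → T1.X)
    (hP : IsPartialInterleaving T1 T2 S1 φ S2 ψ)
    (hfin : S1.Finite ∧ S2.Finite)
    (SQ1 : Set T1.X) (φQ : T1.X → T2.X) (SQ2 : Set T2.X) (ψQ : T2.X → T1.X)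
    (hQfin : SQ1.Finite ∧ SQ2.Finite)
    (hQ : IsMinimalAugmentation T1 T2 S1 φ S2 ψ SQ1 φQ SQ2 ψQ)
    (hdom : DominantInter T1 T2 S1 φ S2 ψ)
    (hlc : LocallyCorrectPartial T1 T2 S1 φ S2 ψ) :
    DominantInter T1 T2 SQ1 φQ SQ2 ψQ ∧
    LocallyCorrectPartial T1 T2 SQ1 φQ SQ2 ψQ := by
  refine ⟨⟨fun x hx => hQ.resDist_lt_shift hP.1 hdom hx, fun y hy => ?_⟩,
    fun S1' h1 S2' h2 => max_le (hQ.resMapShift_le_resDist hP hfin hQfin hdom hlc h1 h2) ?_⟩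
  · rw [resDist_comm]
    exact hQ.swap.resDist_lt_shift hP.2.1 hdom.swap hy
  · rw [resDist_comm]
    exact hQ.swap.resMapShift_le_resDist hP.swap hfin.symm hQfin.symm hdom.swap hlc.swap h2 h1

/-- If P is finite with d_P(T₁,T₂) > 0 and Q is a finite minimal
P-augmentation, and P is dominant and locally correct, then so is Q. -/
theorem minimal_augmentation_dominant_locallyCorrect (T1 T2 : MergeTree)
    (S1 : Set T1.X) (φ : T1.X → T2.X) (S2 : Set T2.X) (ψ : T2.X → T1.X)
    (hP : IsPartialInterleaving T1 T2 S1 φ S2 ψ)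
    (hfin : S1.Finite ∧ S2.Finite)
    (hpos : 0 < resDist T1 T2 S1 φ S2 ψ)
    (SQ1 : Set T1.X) (φQ : T1.X → T2.X) (SQ2 : Set T2.X) (ψQ : T2.X → T1.X)
    (hQfin : SQ1.Finite ∧ SQ2.Finite)
    (hQ : IsMinimalAugmentation T1 T2 S1 φ S2 ψ SQ1 φQ SQ2 ψQ)
    (hdom : DominantInter T1 T2 S1 φ S2 ψ)
    (hlc : LocallyCorrectPartial T1 T2 S1 φ S2 ψ) :
    DominantInter T1 T2 SQ1 φQ SQ2 ψQ ∧
    LocallyCorrectPartial T1 T2 SQ1 φQ SQ2 ψQ :=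
  minimal_augmentation_dominant_locallyCorrect_general T1 T2 S1 φ S2 ψ hP hfin SQ1 φQ SQ2 ψQ hQfin
    hQ hdom hlc
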